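/- Let 0 ≤ a ≤ b and t > 0 with t(b-a) ≥ 1, and let h_t(λ) = (t/√π)∫_a^b exp(-t²(λ-ρ)²) dρ. Then inf_{λ ∈ [a,b]} h_t(λ) ≥ 1/2 - e^{-1}/(2√π) > 1/3. -/

import Mathlib

/-!
The substitution `u = t (ρ - λ)` turns `√π · h_t(λ)` into `∫ e^{-u²}` over `[t(a - λ), t(b - λ)]`,
an interval of length at least `1` containing `0`. As the Gaussian is even and decreasing on
`[0, ∞)`, its primitive `G(x) = ∫₀ˣ e^{-u²}` is subadditive, so this integral is at least
`G(1) = √π/2 - ∫₁^∞ e^{-u²}`, and the tail is at most `∫₁^∞ u e^{-u²} = e^{-1}/2`.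
-/

open Real MeasureTheory intervalIntegral Set

section EvenAntitone

variable {f : ℝ → ℝ}

lemma integral_zero_add_le_of_antitoneOn (hf : Continuous f) (hanti : AntitoneOn f (Ici 0))
    {x y : ℝ} (hx : 0 ≤ x) (hy : 0 ≤ y) :
    ∫ u in 0..x + y, f u ≤ (∫ u in 0..x, f u) + ∫ u in 0..y, f u := by
  rw [← integral_add_adjacent_intervals (hf.intervalIntegrable 0 x) (hf.intervalIntegrable x _),
    add_le_add_iff_left]
  calc ∫ u in x..x + y, f u = ∫ u in 0..y, f (u + x) := by
        rw [integral_comp_add_right, zero_add, add_comm]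
    _ ≤ ∫ u in 0..y, f u :=
        integral_mono_on hy ((hf.comp (continuous_add_const x)).intervalIntegrable 0 y)
          (hf.intervalIntegrable 0 y)
          fun u hu => hanti (mem_Ici.2 hu.1) (mem_Ici.2 (by linarith [hu.1])) (by linarith)

lemma integral_zero_le_integral_of_even (hf : Continuous f) (hanti : AntitoneOn f (Ici 0))
    (heven : ∀ u, f (-u) = f u) (hnonneg : ∀ u, 0 ≤ f u) {c d L : ℝ} (hc : c ≤ 0) (hd : 0 ≤ d)
    (hL : L ≤ d - c) :
    ∫ u in 0..L, f u ≤ ∫ u in c..d, f u := by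
  have hreflect : ∫ u in c..0, f u = ∫ u in 0..-c, f u := by
    simpa [heven] using (integral_comp_neg (a := 0) (b := -c) f).symm
  calc ∫ u in 0..L, f u ≤ ∫ u in 0..-c + d, f u := by
        rw [← integral_add_adjacent_intervals (hf.intervalIntegrable 0 L)
          (hf.intervalIntegrable L (-c + d)), le_add_iff_nonneg_right]
        exact integral_nonneg (by linarith) fun u _ => hnonneg u
    _ ≤ (∫ u in 0..-c, f u) + ∫ u in 0..d, f u :=
        integral_zero_add_le_of_antitoneOn hf hanti (neg_nonneg.2 hc) hd
    _ = ∫ u in c..d, f u := by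
        rw [← hreflect, integral_add_adjacent_intervals (hf.intervalIntegrable c 0)
          (hf.intervalIntegrable 0 d)]

end EvenAntitone

lemma continuous_exp_neg_sq : Continuous fun u : ℝ => exp (-u ^ 2) := by
  fun_prop

lemma antitoneOn_exp_neg_sq : AntitoneOn (fun u : ℝ => exp (-u ^ 2)) (Ici 0) :=
  fun _ hx _ _ hxy => exp_le_exp.2 (neg_le_neg (pow_le_pow_left₀ hx hxy 2))

lemma integral_Ioi_mul_exp_neg_sq (a : ℝ) : ∫ x in Ioi a, x * exp (-x ^ 2) = exp (-a ^ 2) / 2 := by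
  have hderiv : ∀ x ∈ Ici a, HasDerivAt (fun x : ℝ => -exp (-x ^ 2) / 2) (x * exp (-x ^ 2)) x := by
    intro x _
    exact ((hasDerivAt_pow 2 x).fun_neg.exp.fun_neg.div_const 2).congr_deriv (by push_cast; ring)
  have hlim : Filter.Tendsto (fun x : ℝ => -exp (-x ^ 2) / 2) Filter.atTop (nhds 0) := by
    simpa using ((tendsto_exp_atBot.comp (Filter.tendsto_neg_atTop_atBot.comp
      (Filter.tendsto_pow_atTop two_ne_zero))).neg.div_const 2)
  have hint : IntegrableOn (fun x : ℝ => x * exp (-x ^ 2)) (Ioi a) := by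
    simpa using (integrable_mul_exp_neg_mul_sq one_pos).integrableOn
  rw [integral_Ioi_of_hasDerivAt_of_tendsto' hderiv hint hlim]
  ring

-- Compare with `x e^{-x²} / a`, which has an explicit primitive and dominates on `(a, ∞)`.
lemma integral_Ioi_exp_neg_sq_le {a : ℝ} (ha : 0 < a) :
    ∫ x in Ioi a, exp (-x ^ 2) ≤ exp (-a ^ 2) / (2 * a) := by
  have hint : IntegrableOn (fun x : ℝ => x * exp (-x ^ 2)) (Ioi a) := by
    simpa using (integrable_mul_exp_neg_mul_sq one_pos).integrableOn
  calc ∫ x in Ioi a, exp (-x ^ 2) ≤ ∫ x in Ioi a, x * exp (-x ^ 2) / a := by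
        refine setIntegral_mono_on ?_ (hint.div_const a) measurableSet_Ioi fun x hx => ?_
        · simpa using (integrable_exp_neg_mul_sq one_pos).integrableOn
        · rw [le_div_iff₀ ha, mul_comm]
          exact mul_le_mul_of_nonneg_right (le_of_lt hx) (exp_pos _).le
    _ = exp (-a ^ 2) / (2 * a) := by
        rw [MeasureTheory.integral_div, integral_Ioi_mul_exp_neg_sq, div_div]

lemma sqrt_pi_div_two_sub_le_integral_exp_neg_sq {a : ℝ} (ha : 0 < a) :
    √π / 2 - exp (-a ^ 2) / (2 * a) ≤ ∫ u in 0..a, exp (-u ^ 2) := by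
  have hint : IntegrableOn (fun x : ℝ => exp (-x ^ 2)) (Ioi 0) := by
    simpa using (integrable_exp_neg_mul_sq one_pos).integrableOn
  have hsplit : ∫ x in Ioi 0, exp (-x ^ 2) =
      (∫ u in 0..a, exp (-u ^ 2)) + ∫ x in Ioi a, exp (-x ^ 2) := by
    rw [integral_of_le ha.le, ← Ioc_union_Ioi_eq_Ioi ha.le,
      setIntegral_union (Ioc_disjoint_Ioi le_rfl) measurableSet_Ioi
        (hint.mono_set Ioc_subset_Ioi_self) (hint.mono_set (Ioi_subset_Ioi ha.le))]
  have hhalf : ∫ x in Ioi 0, exp (-x ^ 2) = √π / 2 := by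
    simpa using integral_gaussian_Ioi 1
  linarith [integral_Ioi_exp_neg_sq_le ha]

lemma mul_integral_exp_neg_sq_mul_sub {t : ℝ} (ht : t ≠ 0) (l a b : ℝ) :
    t * ∫ ρ in a..b, exp (-t ^ 2 * (l - ρ) ^ 2) = ∫ u in t * (a - l)..t * (b - l), exp (-u ^ 2) := by
  have hshape : ∀ ρ, exp (-t ^ 2 * (l - ρ) ^ 2) = exp (-(t * (ρ - l)) ^ 2) := fun ρ => by
    congr 1; ring
  simp_rw [hshape, integral_comp_sub_right (fun v => exp (-(t * v) ^ 2)) l,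
    integral_comp_mul_left (fun u => exp (-u ^ 2)) ht, smul_eq_mul, mul_inv_cancel_left₀ ht]

lemma exp_neg_one_div_two_sqrt_pi_lt : exp (-1) / (2 * √π) < 1 / 6 := by
  have hsqrt : 3 / 2 < √π := (lt_sqrt (by norm_num)).2 (by linarith [pi_gt_three])
  rw [div_lt_iff₀ (by positivity)]
  linarith [exp_neg_one_lt_half]

theorem inf_ht_on_interval_general (a b t : ℝ) (ht : 0 < t)
    (htab : 1 ≤ t * (b - a)) :
    (∀ l ∈ Set.Icc a b,
        1 / 2 - Real.exp (-1) / (2 * Real.sqrt π) ≤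
          (t / Real.sqrt π) * ∫ ρ in a..b, Real.exp (-t ^ 2 * (l - ρ) ^ 2)) ∧
      (1 : ℝ) / 3 < 1 / 2 - Real.exp (-1) / (2 * Real.sqrt π) := by
  refine ⟨fun l ⟨hal, hlb⟩ => ?_, by linarith [exp_neg_one_div_two_sqrt_pi_lt]⟩
  have hmass : √π / 2 - exp (-1) / 2 ≤ t * ∫ ρ in a..b, exp (-t ^ 2 * (l - ρ) ^ 2) :=
    calc √π / 2 - exp (-1) / 2 ≤ ∫ u in 0..1, exp (-u ^ 2) := by
          simpa using sqrt_pi_div_two_sub_le_integral_exp_neg_sq one_pos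
      _ ≤ ∫ u in t * (a - l)..t * (b - l), exp (-u ^ 2) :=
          integral_zero_le_integral_of_even continuous_exp_neg_sq antitoneOn_exp_neg_sq
            (fun u => by simp) (fun u => (exp_pos _).le)
            (mul_nonpos_of_nonneg_of_nonpos ht.le (by linarith))
            (mul_nonneg ht.le (by linarith)) (by linarith)
      _ = t * ∫ ρ in a..b, exp (-t ^ 2 * (l - ρ) ^ 2) :=
          (mul_integral_exp_neg_sq_mul_sub ht.ne' l a b).symm
  have hπ : 0 < √π := sqrt_pos.2 pi_pos
  rw [div_mul_eq_mul_div, le_div_iff₀ hπ]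
  calc (1 / 2 - exp (-1) / (2 * √π)) * √π = √π / 2 - exp (-1) / 2 := by field_simp
    _ ≤ _ := hmass

theorem inf_ht_on_interval (a b t : ℝ) (ha : 0 ≤ a) (hab : a ≤ b) (ht : 0 < t)
    (htab : 1 ≤ t * (b - a)) :
    (∀ l ∈ Set.Icc a b,
        1 / 2 - Real.exp (-1) / (2 * Real.sqrt π) ≤
          (t / Real.sqrt π) * ∫ ρ in a..b, Real.exp (-t ^ 2 * (l - ρ) ^ 2)) ∧
      (1 : ℝ) / 3 < 1 / 2 - Real.exp (-1) / (2 * Real.sqrt π) :=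
  inf_ht_on_interval_general a b t ht htab
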